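/- The quasi-flat form translates to BC(∀HyperLTL): for LTL formulas αᵢ, β_{i,j}, and every team T, T ⊨ ⊕ᵢ (αᵢ ∧ ⋀ⱼ ∃β_{i,j}) under lax team semantics (where T ⊨ ∃β abbreviates: some t ∈ T satisfies β in LTL) if and only if ∅ ⊨_T ⋁ᵢ (∀π.αᵢ(π) ∧ ⋀ⱼ ∃π.β_{i,j}(π)) in HyperLTL. -/
import Mathlib


/-- A trace over `AP`: an infinite sequence of sets of atomic propositions. -/
def Trace (AP : Type) := ℕ → Set AP

/-- The suffix `t[i,∞]` of a trace. -/
def Trace.shift {AP : Type} (t : Trace AP) (i : ℕ) : Trace AP := fun n => t (n + i)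

/-- `T[f,∞] = {t[s,∞] | t ∈ T, s ∈ f(t)}`. -/
def teamShift {AP : Type} (T : Set (Trace AP)) (f : Trace AP → Set ℕ) : Set (Trace AP) :=
  {s | ∃ t ∈ T, ∃ i ∈ f t, s = t.shift i}

/-- `f : T → 𝒫(ℕ)⁺`: assigns a nonempty set of time steps to every trace of the team. -/
def goodF {AP : Type} (T : Set (Trace AP)) (f : Trace AP → Set ℕ) : Prop :=
  ∀ t ∈ T, (f t).Nonempty

/-- The ordering `f' < f` on choice functions (on the domain `T'`). -/
def fLT {AP : Type} (T' : Set (Trace AP)) (f' f : Trace AP → Set ℕ) : Prop :=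
  ∀ t ∈ T', sInf (f' t) ≤ sInf (f t) ∧
    ∀ m, IsGreatest (f t) m → ∃ m', IsGreatest (f' t) m' ∧ m' < m

/-- Formulas of (NNF) LTL, extended with the Boolean disjunction `boolOr` (⊕)
and the Boolean negation `bNeg` (∼). -/
inductive TForm (AP : Type) where
  | pos : AP → TForm AP
  | neg : AP → TForm AP
  | and : TForm AP → TForm AP → TForm AP
  | or : TForm AP → TForm AP → TForm AP
  | boolOr : TForm AP → TForm AP → TForm AP
  | bNeg : TForm AP → TForm AP
  | next : TForm AP → TForm AP
  | glob : TForm AP → TForm AP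
  | untl : TForm AP → TForm AP → TForm AP

/-- Plain LTL formulas (negation normal form; no ⊕, no ∼). -/
def TForm.isLTL {AP : Type} : TForm AP → Prop
  | .pos _ => True
  | .neg _ => True
  | .and φ ψ => φ.isLTL ∧ ψ.isLTL
  | .or φ ψ => φ.isLTL ∧ ψ.isLTL
  | .boolOr _ _ => False
  | .bNeg _ => False
  | .next φ => φ.isLTL
  | .glob φ => φ.isLTL
  | .untl φ ψ => φ.isLTL ∧ ψ.isLTL

/-- TeamLTL(⊕) formulas: no Boolean negation. -/
def TForm.noBNeg {AP : Type} : TForm AP → Prop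
  | .pos _ => True
  | .neg _ => True
  | .and φ ψ => φ.noBNeg ∧ ψ.noBNeg
  | .or φ ψ => φ.noBNeg ∧ ψ.noBNeg
  | .boolOr φ ψ => φ.noBNeg ∧ ψ.noBNeg
  | .bNeg _ => False
  | .next φ => φ.noBNeg
  | .glob φ => φ.noBNeg
  | .untl φ ψ => φ.noBNeg ∧ ψ.noBNeg

/-- Ordinary single-trace LTL satisfaction (⊕ read as ∨ and ∼ as ¬). -/
def TForm.sat {AP : Type} : Trace AP → TForm AP → Prop
  | t, .pos p => p ∈ t 0
  | t, .neg p => p ∉ t 0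
  | t, .and φ ψ => TForm.sat t φ ∧ TForm.sat t ψ
  | t, .or φ ψ => TForm.sat t φ ∨ TForm.sat t ψ
  | t, .boolOr φ ψ => TForm.sat t φ ∨ TForm.sat t ψ
  | t, .bNeg φ => ¬ TForm.sat t φ
  | t, .next φ => TForm.sat (t.shift 1) φ
  | t, .glob φ => ∀ i, TForm.sat (t.shift i) φ
  | t, .untl φ ψ => ∃ i, TForm.sat (t.shift i) ψ ∧ ∀ j < i, TForm.sat (t.shift j) φ

/-- Lax team semantics of TeamLTL(⊕,∼). -/
def TForm.teamSat {AP : Type} : Set (Trace AP) → TForm AP → Prop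
  | T, .pos p => ∀ t ∈ T, p ∈ t 0
  | T, .neg p => ∀ t ∈ T, p ∉ t 0
  | T, .and φ ψ => TForm.teamSat T φ ∧ TForm.teamSat T ψ
  | T, .or φ ψ => ∃ T₁ T₂, T₁ ∪ T₂ = T ∧ TForm.teamSat T₁ φ ∧ TForm.teamSat T₂ ψ
  | T, .boolOr φ ψ => TForm.teamSat T φ ∨ TForm.teamSat T ψ
  | T, .bNeg φ => ¬ TForm.teamSat T φ
  | T, .next φ => TForm.teamSat (teamShift T (fun _ => {1})) φ
  | T, .glob φ => ∀ f, goodF T f → TForm.teamSat (teamShift T f) φ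
  | T, .untl φ ψ => ∃ f, goodF T f ∧ TForm.teamSat (teamShift T f) ψ ∧
      ∀ f', goodF {t ∈ T | ¬ IsGreatest (f t) 0} f' →
        fLT {t ∈ T | ¬ IsGreatest (f t) 0} f' f →
        ({t ∈ T | ¬ IsGreatest (f t) 0} = (∅ : Set (Trace AP)) ∨
          TForm.teamSat (teamShift {t ∈ T | ¬ IsGreatest (f t) 0} f') φ)

/-- HyperLTL formulas (quantifiers may occur anywhere). -/
inductive HForm (AP V : Type) where
  | atom : AP → V → HForm AP V
  | hnot : HForm AP V → HForm AP V
  | hand : HForm AP V → HForm AP V → HForm AP V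
  | hor : HForm AP V → HForm AP V → HForm AP V
  | hnext : HForm AP V → HForm AP V
  | hglob : HForm AP V → HForm AP V
  | huntl : HForm AP V → HForm AP V → HForm AP V
  | hall : V → HForm AP V → HForm AP V
  | hex : V → HForm AP V → HForm AP V

/-- Shift a trace assignment: `Π[i,∞]`. -/
def shiftA {AP V : Type} (A : V → Trace AP) (i : ℕ) : V → Trace AP := fun v => (A v).shift i

/-- HyperLTL satisfaction `Π ⊨_T φ`. -/
def HForm.hsat {AP V : Type} [DecidableEq V] :
    (V → Trace AP) → Set (Trace AP) → HForm AP V → Prop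
  | A, _, .atom a v => a ∈ A v 0
  | A, T, .hnot φ => ¬ HForm.hsat A T φ
  | A, T, .hand φ ψ => HForm.hsat A T φ ∧ HForm.hsat A T ψ
  | A, T, .hor φ ψ => HForm.hsat A T φ ∨ HForm.hsat A T ψ
  | A, T, .hnext φ => HForm.hsat (shiftA A 1) T φ
  | A, T, .hglob φ => ∀ i, HForm.hsat (shiftA A i) T φ
  | A, T, .huntl φ ψ => ∃ i, HForm.hsat (shiftA A i) T ψ ∧
      ∀ j < i, HForm.hsat (shiftA A j) T φ
  | A, T, .hall v φ => ∀ t ∈ T, HForm.hsat (Function.update A v t) T φ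
  | A, T, .hex v φ => ∃ t ∈ T, HForm.hsat (Function.update A v t) T φ

/-- Quantifier-free HyperLTL formulas. -/
def HForm.QFree {AP V : Type} : HForm AP V → Prop
  | .atom _ _ => True
  | .hnot φ => φ.QFree
  | .hand φ ψ => φ.QFree ∧ ψ.QFree
  | .hor φ ψ => φ.QFree ∧ ψ.QFree
  | .hnext φ => φ.QFree
  | .hglob φ => φ.QFree
  | .huntl φ ψ => φ.QFree ∧ ψ.QFree
  | .hall _ _ => False
  | .hex _ _ => False

/-- All trace variables occurring in a HyperLTL formula. -/
def HForm.vars {AP V : Type} : HForm AP V → Set V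
  | .atom _ v => {v}
  | .hnot φ => φ.vars
  | .hand φ ψ => φ.vars ∪ ψ.vars
  | .hor φ ψ => φ.vars ∪ ψ.vars
  | .hnext φ => φ.vars
  | .hglob φ => φ.vars
  | .huntl φ ψ => φ.vars ∪ ψ.vars
  | .hall v φ => insert v φ.vars
  | .hex v φ => insert v φ.vars

/-- Free trace variables of a HyperLTL formula. -/
def HForm.free {AP V : Type} : HForm AP V → Set V
  | .atom _ v => {v}
  | .hnot φ => φ.free
  | .hand φ ψ => φ.free ∪ ψ.free
  | .hor φ ψ => φ.free ∪ ψ.free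
  | .hnext φ => φ.free
  | .hglob φ => φ.free
  | .huntl φ ψ => φ.free ∪ ψ.free
  | .hall v φ => φ.free \ {v}
  | .hex v φ => φ.free \ {v}

/-- Rename the trace variables of a HyperLTL formula. -/
def HForm.rename {AP V : Type} (ρ : V → V) : HForm AP V → HForm AP V
  | .atom a v => .atom a (ρ v)
  | .hnot φ => .hnot (φ.rename ρ)
  | .hand φ ψ => .hand (φ.rename ρ) (ψ.rename ρ)
  | .hor φ ψ => .hor (φ.rename ρ) (ψ.rename ρ)
  | .hnext φ => .hnext (φ.rename ρ)
  | .hglob φ => .hglob (φ.rename ρ)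
  | .huntl φ ψ => .huntl (φ.rename ρ) (ψ.rename ρ)
  | .hall v φ => .hall (ρ v) (φ.rename ρ)
  | .hex v φ => .hex (ρ v) (φ.rename ρ)

/-- Hyperification `φ ↦ φ(π)`: replace each proposition `p` by `p_π`. -/
def TForm.hyperify {AP V : Type} (π : V) : TForm AP → HForm AP V
  | .pos p => .atom p π
  | .neg p => .hnot (.atom p π)
  | .and φ ψ => .hand (φ.hyperify π) (ψ.hyperify π)
  | .or φ ψ => .hor (φ.hyperify π) (ψ.hyperify π)
  | .boolOr φ ψ => .hor (φ.hyperify π) (ψ.hyperify π)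
  | .bNeg φ => .hnot (φ.hyperify π)
  | .next φ => .hnext (φ.hyperify π)
  | .glob φ => .hglob (φ.hyperify π)
  | .untl φ ψ => .huntl (φ.hyperify π) (ψ.hyperify π)

/-- A tautological NNF LTL formula. -/
def TForm.verum {AP : Type} [Inhabited AP] : TForm AP := .or (.pos default) (.neg default)

/-- Negation normal form of the (classical) negation of an NNF LTL formula. -/
def TForm.dual {AP : Type} [Inhabited AP] : TForm AP → TForm AP
  | .pos p => .neg p
  | .neg p => .pos p
  | .and φ ψ => .or φ.dual ψ.dual
  | .or φ ψ => .and φ.dual ψ.dual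
  | .boolOr φ ψ => .and φ.dual ψ.dual
  | .bNeg φ => φ
  | .next φ => .next φ.dual
  | .glob φ => .untl TForm.verum φ.dual
  | .untl φ ψ => .or (.glob ψ.dual) (.untl ψ.dual (.and φ.dual ψ.dual))

/-- The shorthand `∃β := ∼β^d`. -/
def TForm.tExists {AP : Type} [Inhabited AP] (β : TForm AP) : TForm AP := .bNeg β.dual

mutual
/-- Erase trace-variable subscripts: turn a quantifier-free HyperLTL formula into
an (NNF) LTL formula, pushing classical negations inward. -/
def deH {AP V : Type} [Inhabited AP] : HForm AP V → TForm AP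
  | .atom a _ => .pos a
  | .hnot φ => deHn φ
  | .hand φ ψ => .and (deH φ) (deH ψ)
  | .hor φ ψ => .or (deH φ) (deH ψ)
  | .hnext φ => .next (deH φ)
  | .hglob φ => .glob (deH φ)
  | .huntl φ ψ => .untl (deH φ) (deH ψ)
  | .hall _ φ => deH φ
  | .hex _ φ => deH φ

/-- NNF of the negation of an erased quantifier-free HyperLTL formula. -/
def deHn {AP V : Type} [Inhabited AP] : HForm AP V → TForm AP
  | .atom a _ => .neg a
  | .hnot φ => deH φ
  | .hand φ ψ => .or (deHn φ) (deHn ψ)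
  | .hor φ ψ => .and (deHn φ) (deHn ψ)
  | .hnext φ => .next (deHn φ)
  | .hglob φ => .untl TForm.verum (deHn φ)
  | .huntl φ ψ => .or (.glob (deHn ψ)) (.untl (deHn ψ) (.and (deHn φ) (deHn ψ)))
  | .hall _ φ => deHn φ
  | .hex _ φ => deHn φ
end

/-- `φ₀ ∨ φ₁ ∨ ⋯ ∨ φₘ` for a nonempty family of HyperLTL formulas. -/
def HForm.bigOrF {AP V : Type} {m : ℕ} (f : Fin (m + 1) → HForm AP V) : HForm AP V :=
  (List.ofFn fun i : Fin m => f i.succ).foldr .hor (f 0)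

/-- `φ₀ ∧ φ₁ ∧ ⋯ ∧ φₘ` for a nonempty family of HyperLTL formulas. -/
def HForm.bigAndF {AP V : Type} {m : ℕ} (f : Fin (m + 1) → HForm AP V) : HForm AP V :=
  (List.ofFn fun i : Fin m => f i.succ).foldr .hand (f 0)

/-- `φ₀ ⊕ φ₁ ⊕ ⋯ ⊕ φₘ` for a nonempty family of team formulas. -/
def TForm.bigBoolOrF {AP : Type} {m : ℕ} (f : Fin (m + 1) → TForm AP) : TForm AP :=
  (List.ofFn fun i : Fin m => f i.succ).foldr .boolOr (f 0)

/-- `φ₀ ∧ φ₁ ∧ ⋯ ∧ φₘ` for a nonempty family of team formulas. -/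
def TForm.bigAndF {AP : Type} {m : ℕ} (f : Fin (m + 1) → TForm AP) : TForm AP :=
  (List.ofFn fun i : Fin m => f i.succ).foldr .and (f 0)

/-- Apply a quantifier block (`true` = ∀, `false` = ∃). -/
def applyBlock {AP V : Type} (qs : List (Bool × V)) (φ : HForm AP V) : HForm AP V :=
  qs.foldr (fun q acc => if q.1 then .hall q.2 acc else .hex q.2 acc) φ

/-- The dual of a quantifier block. -/
def dualBlock {V : Type} (qs : List (Bool × V)) : List (Bool × V) :=
  qs.map fun q => (!q.1, q.2)

section Aux

variable {AP V : Type}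

lemma Trace.shift_zero (t : Trace AP) : t.shift 0 = t := rfl

/-- Flatness of LTL formulas under lax team semantics. -/
lemma TForm.flat (φ : TForm AP) (h : φ.isLTL) :
    ∀ T : Set (Trace AP), φ.teamSat T ↔ ∀ t ∈ T, φ.sat t := by
  induction φ with
  | pos p => intro T; rfl
  | neg p => intro T; rfl
  | and φ ψ ihφ ihψ =>
    intro T
    simp only [TForm.teamSat, TForm.sat, ihφ h.1, ihψ h.2]
    constructor
    · rintro ⟨h1, h2⟩ t ht; exact ⟨h1 t ht, h2 t ht⟩
    · intro h'; exact ⟨fun t ht => (h' t ht).1, fun t ht => (h' t ht).2⟩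
  | or φ ψ ihφ ihψ =>
    intro T
    constructor
    · rintro ⟨T₁, T₂, hU, h₁, h₂⟩ t ht
      rw [← hU] at ht
      rcases ht with ht | ht
      · exact Or.inl ((ihφ h.1 T₁).1 h₁ t ht)
      · exact Or.inr ((ihψ h.2 T₂).1 h₂ t ht)
    · intro h'
      refine ⟨{t ∈ T | φ.sat t}, {t ∈ T | ψ.sat t}, ?_, ?_, ?_⟩
      · ext t
        constructor
        · rintro (ht | ht) <;> exact ht.1
        · intro ht; rcases h' t ht with hs | hs
          · exact Or.inl ⟨ht, hs⟩
          · exact Or.inr ⟨ht, hs⟩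
      · exact (ihφ h.1 _).2 fun t ht => ht.2
      · exact (ihψ h.2 _).2 fun t ht => ht.2
  | boolOr φ ψ ihφ ihψ => exact absurd h (by simp [TForm.isLTL])
  | bNeg φ ih => exact absurd h (by simp [TForm.isLTL])
  | next φ ih =>
    intro T
    show φ.teamSat _ ↔ _
    rw [ih h]
    constructor
    · intro h' t ht; exact h' _ ⟨t, ht, 1, rfl, rfl⟩
    · rintro h' s ⟨t, ht, i, hi, rfl⟩
      rcases hi with rfl
      exact h' t ht
  | glob φ ih =>
    intro T
    constructor
    · intro h' t ht i
      have := (ih h _).1 (h' (fun _ => Set.univ) (fun t _ => ⟨0, trivial⟩))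
      exact this _ ⟨t, ht, i, trivial, rfl⟩
    · intro h' f hf
      refine (ih h _).2 ?_
      rintro s ⟨t, ht, i, hi, rfl⟩
      exact h' t ht i
  | untl φ ψ ihφ ihψ =>
    intro T
    constructor
    · rintro ⟨f, hf, hψ, hcond⟩ t ht
      have hψ' := (ihψ h.2 _).1 hψ
      by_cases h0 : IsGreatest (f t) 0
      · exact ⟨0, hψ' _ ⟨t, ht, 0, h0.1, rfl⟩, fun j hj => absurd hj (Nat.not_lt_zero j)⟩
      · refine ⟨sInf (f t), hψ' _ ⟨t, ht, sInf (f t), Nat.sInf_mem (hf t ht), rfl⟩, ?_⟩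
        intro j hj
        classical
        set f' : Trace AP → Set ℕ := fun t' => if t' = t then {j} else {0} with hf'
        have hgood : goodF {s ∈ T | ¬ IsGreatest (f s) 0} f' := by
          intro t' _
          by_cases h' : t' = t <;> simp [hf', h']
        have hlt : fLT {s ∈ T | ¬ IsGreatest (f s) 0} f' f := by
          intro t' ht'
          by_cases h' : t' = t
          · subst h'
            refine ⟨?_, ?_⟩
            · simp only [hf', if_pos rfl, csInf_singleton]
              exact le_of_lt hj
            · intro m hm
              refine ⟨j, by simp [hf'], ?_⟩
              exact lt_of_lt_of_le hj (Nat.sInf_le hm.1)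
          · refine ⟨?_, ?_⟩
            · simp [hf', h']
            · intro m hm
              refine ⟨0, by simp [hf', h'], ?_⟩
              rcases Nat.eq_zero_or_pos m with rfl | hp
              · exact absurd hm ht'.2
              · exact hp
        rcases hcond f' hgood hlt with hemp | hsat
        · exact absurd hemp (Set.nonempty_iff_ne_empty.1 ⟨t, ht, h0⟩)
        · have := (ihφ h.1 _).1 hsat
          exact this _ ⟨t, ⟨ht, h0⟩, j, by simp [hf'], rfl⟩
    · intro h'
      classical
      set i : Trace AP → ℕ :=
        fun t => if ht : t ∈ T then Classical.choose (h' t ht) else 0 with hi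
      have hspec : ∀ t (ht : t ∈ T),
          ψ.sat (t.shift (i t)) ∧ ∀ j < i t, φ.sat (t.shift j) := by
        intro t ht
        have := Classical.choose_spec (h' t ht)
        simpa [hi, dif_pos ht] using this
      refine ⟨fun t => {i t}, fun t _ => ⟨i t, rfl⟩, ?_, ?_⟩
      · refine (ihψ h.2 _).2 ?_
        rintro s ⟨t, ht, k, hk, rfl⟩
        rcases hk with rfl
        exact (hspec t ht).1
      · intro f' hg' hlt'
        right
        refine (ihφ h.1 _).2 ?_
        rintro s ⟨t, ht, k, hk, rfl⟩
        obtain ⟨htT, hne⟩ := ht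
        obtain ⟨-, hm⟩ := hlt' t ⟨htT, hne⟩
        obtain ⟨m', hm', hlt⟩ := hm (i t) ⟨rfl, fun x hx => le_of_eq hx⟩
        have : k ≤ m' := hm'.2 hk
        exact (hspec t htT).2 k (lt_of_le_of_lt this hlt)

lemma TForm.verum_sat [Inhabited AP] (t : Trace AP) : TForm.sat t (TForm.verum) := by
  simp only [TForm.verum, TForm.sat]
  exact em _

lemma TForm.dual_isLTL [Inhabited AP] (φ : TForm AP) (h : φ.isLTL) : φ.dual.isLTL := by
  induction φ <;> simp_all [TForm.isLTL, TForm.dual, TForm.verum]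

lemma TForm.sat_dual [Inhabited AP] (φ : TForm AP) (h : φ.isLTL) :
    ∀ t : Trace AP, φ.dual.sat t ↔ ¬ φ.sat t := by
  induction φ with
  | pos p => intro t; simp [TForm.dual, TForm.sat]
  | neg p => intro t; simp [TForm.dual, TForm.sat]
  | and φ ψ ihφ ihψ =>
    intro t; simp [TForm.dual, TForm.sat, ihφ h.1, ihψ h.2]; tauto
  | or φ ψ ihφ ihψ =>
    intro t; simp [TForm.dual, TForm.sat, ihφ h.1, ihψ h.2]
  | boolOr φ ψ ihφ ihψ => exact absurd h (by simp [TForm.isLTL])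
  | bNeg φ ih => exact absurd h (by simp [TForm.isLTL])
  | next φ ih => intro t; simp [TForm.dual, TForm.sat, ih h]
  | glob φ ih =>
    intro t
    simp only [TForm.dual, TForm.sat, ih h, not_forall]
    constructor
    · rintro ⟨k, hk, -⟩; exact ⟨k, hk⟩
    · rintro ⟨k, hk⟩; exact ⟨k, hk, fun j _ => TForm.verum_sat _⟩
  | untl φ ψ ihφ ihψ =>
    intro t
    classical
    simp only [TForm.dual, TForm.sat, ihφ h.1, ihψ h.2]
    constructor
    · rintro (hg | ⟨k, ⟨hkφ, hkψ⟩, hklt⟩) ⟨k', hk', hk'lt⟩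
      · exact hg k' hk'
      · rcases lt_trichotomy k k' with hlt | rfl | hlt
        · exact hkφ (hk'lt k hlt)
        · exact hkψ hk'
        · exact hklt k' hlt hk'
    · intro hn
      by_cases hg : ∀ k, ¬ ψ.sat (t.shift k)
      · exact Or.inl hg
      · push_neg at hg
        have hex : ∃ k, ψ.sat (t.shift k) ∨ ¬ φ.sat (t.shift k) := by
          obtain ⟨k, hk⟩ := hg; exact ⟨k, Or.inl hk⟩
        right
        set k0 := Nat.find hex with hk0
        have hspec := Nat.find_spec hex
        have hmin : ∀ j < k0, φ.sat (t.shift j) ∧ ¬ ψ.sat (t.shift j) := by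
          intro j hj
          have := Nat.find_min hex hj
          push_neg at this
          exact ⟨this.2, this.1⟩
        have hkψ : ¬ ψ.sat (t.shift k0) := by
          intro hψk
          exact hn ⟨k0, hψk, fun j hj => (hmin j hj).1⟩
        have hkφ : ¬ φ.sat (t.shift k0) := by
          rcases hspec with hs | hs
          · exact absurd hs hkψ
          · exact hs
        exact ⟨k0, ⟨hkφ, hkψ⟩, fun j hj => (hmin j hj).2⟩

/-- `T ⊨ ∃β` iff some trace of `T` satisfies `β`. -/
lemma TForm.teamSat_tExists [Inhabited AP] (β : TForm AP) (h : β.isLTL)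
    (T : Set (Trace AP)) : β.tExists.teamSat T ↔ ∃ t ∈ T, β.sat t := by
  show ¬ β.dual.teamSat T ↔ _
  rw [TForm.flat _ (TForm.dual_isLTL β h)]
  push_neg
  simp only [TForm.sat_dual β h, not_not]

lemma HForm.hsat_hyperify [DecidableEq V] (φ : TForm AP) (π : V) :
    ∀ (A : V → Trace AP) (T : Set (Trace AP)),
      HForm.hsat A T (φ.hyperify π) ↔ φ.sat (A π) := by
  induction φ with
  | pos p => intro A T; rfl
  | neg p => intro A T; rfl
  | and φ ψ ihφ ihψ => intro A T; simp [TForm.hyperify, HForm.hsat, TForm.sat, ihφ, ihψ]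
  | or φ ψ ihφ ihψ => intro A T; simp [TForm.hyperify, HForm.hsat, TForm.sat, ihφ, ihψ]
  | boolOr φ ψ ihφ ihψ => intro A T; simp [TForm.hyperify, HForm.hsat, TForm.sat, ihφ, ihψ]
  | bNeg φ ih => intro A T; simp [TForm.hyperify, HForm.hsat, TForm.sat, ih]
  | next φ ih =>
    intro A T
    show HForm.hsat (shiftA A 1) T _ ↔ _
    rw [ih]; rfl
  | glob φ ih =>
    intro A T
    show (∀ i, HForm.hsat (shiftA A i) T _) ↔ _
    simp only [ih]; rfl
  | untl φ ψ ihφ ihψ =>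
    intro A T
    show (∃ i, HForm.hsat (shiftA A i) T _ ∧ ∀ j < i, HForm.hsat (shiftA A j) T _) ↔ _
    simp only [ihφ, ihψ]; rfl

lemma teamSat_foldr_boolOr (T : Set (Trace AP)) (l : List (TForm AP)) (φ : TForm AP) :
    TForm.teamSat T (l.foldr .boolOr φ) ↔
      TForm.teamSat T φ ∨ ∃ ψ ∈ l, TForm.teamSat T ψ := by
  induction l with
  | nil => simp
  | cons a l ih =>
    show TForm.teamSat T a ∨ _ ↔ _
    simp [ih]; tauto

lemma teamSat_foldr_and (T : Set (Trace AP)) (l : List (TForm AP)) (φ : TForm AP) :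
    TForm.teamSat T (l.foldr .and φ) ↔
      TForm.teamSat T φ ∧ ∀ ψ ∈ l, TForm.teamSat T ψ := by
  induction l with
  | nil => simp
  | cons a l ih =>
    show TForm.teamSat T a ∧ _ ↔ _
    simp [ih]; tauto

lemma hsat_foldr_hor [DecidableEq V] (A : V → Trace AP) (T : Set (Trace AP))
    (l : List (HForm AP V)) (φ : HForm AP V) :
    HForm.hsat A T (l.foldr .hor φ) ↔
      HForm.hsat A T φ ∨ ∃ ψ ∈ l, HForm.hsat A T ψ := by
  induction l with
  | nil => simp
  | cons a l ih =>
    show HForm.hsat A T a ∨ _ ↔ _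
    simp [ih]; tauto

lemma hsat_foldr_hand [DecidableEq V] (A : V → Trace AP) (T : Set (Trace AP))
    (l : List (HForm AP V)) (φ : HForm AP V) :
    HForm.hsat A T (l.foldr .hand φ) ↔
      HForm.hsat A T φ ∧ ∀ ψ ∈ l, HForm.hsat A T ψ := by
  induction l with
  | nil => simp
  | cons a l ih =>
    show HForm.hsat A T a ∧ _ ↔ _
    simp [ih]; tauto

lemma fin_succ_iff_or {m : ℕ} (P : Fin (m + 1) → Prop) :
    (P 0 ∨ ∃ i : Fin m, P i.succ) ↔ ∃ i, P i := by
  constructor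
  · rintro (h | ⟨i, h⟩)
    · exact ⟨0, h⟩
    · exact ⟨i.succ, h⟩
  · rintro ⟨i, h⟩
    induction i using Fin.cases with
    | zero => exact Or.inl h
    | succ i => exact Or.inr ⟨i, h⟩

lemma fin_succ_iff_and {m : ℕ} (P : Fin (m + 1) → Prop) :
    (P 0 ∧ ∀ i : Fin m, P i.succ) ↔ ∀ i, P i := by
  constructor
  · rintro ⟨h0, hs⟩ i
    induction i using Fin.cases with
    | zero => exact h0
    | succ i => exact hs i
  · intro h; exact ⟨h 0, fun i => h i.succ⟩

lemma teamSat_bigBoolOrF {m : ℕ} (T : Set (Trace AP)) (f : Fin (m + 1) → TForm AP) :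
    TForm.teamSat T (TForm.bigBoolOrF f) ↔ ∃ i, TForm.teamSat T (f i) := by
  rw [TForm.bigBoolOrF, teamSat_foldr_boolOr, ← fin_succ_iff_or (fun i => TForm.teamSat T (f i))]
  simp [List.mem_ofFn]

lemma teamSat_bigAndF {m : ℕ} (T : Set (Trace AP)) (f : Fin (m + 1) → TForm AP) :
    TForm.teamSat T (TForm.bigAndF f) ↔ ∀ i, TForm.teamSat T (f i) := by
  rw [TForm.bigAndF, teamSat_foldr_and, ← fin_succ_iff_and (fun i => TForm.teamSat T (f i))]
  simp [List.mem_ofFn]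

lemma hsat_bigOrF [DecidableEq V] {m : ℕ} (A : V → Trace AP) (T : Set (Trace AP))
    (f : Fin (m + 1) → HForm AP V) :
    HForm.hsat A T (HForm.bigOrF f) ↔ ∃ i, HForm.hsat A T (f i) := by
  rw [HForm.bigOrF, hsat_foldr_hor, ← fin_succ_iff_or (fun i => HForm.hsat A T (f i))]
  simp [List.mem_ofFn]

lemma hsat_bigAndF [DecidableEq V] {m : ℕ} (A : V → Trace AP) (T : Set (Trace AP))
    (f : Fin (m + 1) → HForm AP V) :
    HForm.hsat A T (HForm.bigAndF f) ↔ ∀ i, HForm.hsat A T (f i) := by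
  rw [HForm.bigAndF, hsat_foldr_hand, ← fin_succ_iff_and (fun i => HForm.hsat A T (f i))]
  simp [List.mem_ofFn]

end Aux

/-- The quasi-flat form translates to BC(∀HyperLTL):
`T ⊨ ⊕ᵢ (αᵢ ∧ ⋀ⱼ ∃βᵢⱼ)` iff `∅ ⊨_T ⋁ᵢ (∀π.αᵢ(π) ∧ ⋀ⱼ ∃π.βᵢⱼ(π))`. -/
theorem quasi_flat_translation {AP V : Type} [Inhabited AP] [DecidableEq V]
    (m n : ℕ) (π : V)
    (α : Fin (m + 1) → TForm AP) (β : Fin (m + 1) → Fin (n + 1) → TForm AP)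
    (hα : ∀ i, (α i).isLTL) (hβ : ∀ i j, (β i j).isLTL)
    (T : Set (Trace AP)) (A : V → Trace AP) :
    TForm.teamSat T
        (TForm.bigBoolOrF fun i =>
          .and (α i) (TForm.bigAndF fun j => (β i j).tExists)) ↔
      HForm.hsat A T
        (HForm.bigOrF fun i =>
          .hand (.hall π ((α i).hyperify π))
            (HForm.bigAndF fun j => .hex π ((β i j).hyperify π))) := by
  rw [teamSat_bigBoolOrF, hsat_bigOrF]
  apply exists_congr
  intro i
  show TForm.teamSat T (α i) ∧ TForm.teamSat T _ ↔ HForm.hsat A T _ ∧ HForm.hsat A T _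
  rw [TForm.flat _ (hα i), teamSat_bigAndF, hsat_bigAndF]
  apply and_congr
  · show _ ↔ ∀ t ∈ T, HForm.hsat (Function.update A π t) T _
    apply forall_congr'
    intro t
    apply imp_congr_right
    intro _
    rw [HForm.hsat_hyperify, Function.update_self]
  · apply forall_congr'
    intro j
    rw [TForm.teamSat_tExists _ (hβ i j)]
    show _ ↔ ∃ t ∈ T, HForm.hsat (Function.update A π t) T _
    apply exists_congr
    intro t
    apply and_congr_right
    intro _
    rw [HForm.hsat_hyperify, Function.update_self]
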